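/- arXiv:1206.3455 — 3 statements merged into one kernel-verified Lean document; each statement's English description precedes it below -/
import Mathlib

section
/- Let a₂, a₁, a₀, b₁, b₀, c₀ be real numbers and suppose there exist real numbers r₁, r₀, s₁, s₀ with b₁ = r₁s₁, b₀ = r₀s₀, s₀² + s₁² ≤ c₀, a₂ − r₁² > 0, and a₁² < 4(a₂ − r₁²)(a₀ − r₀²). Let A be the operator on S(ℝ) given by (Au)(x) = (a₂x² + a₁x + a₀ − ib₁)u(x) + 2(b₁x + b₀)(Du)(x) + c₀(D²u)(x), with D = −i d/dx. Then for every u ∈ S(ℝ) the L² inner product (Au | u) = ∫ Au(x) conj(u(x)) dx is real and satisfies (Au | u) ≥ [(4(a₀ − r₀²)(a₂ − r₁²) − a₁²)/(4(a₂ − r₁²))] · ‖u‖²_{L²}. -/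
open MeasureTheory SchwartzMap Complex Filter

noncomputable section




/-- Upgrade an `ℝ`-linear continuous map between Schwartz spaces to a `ℂ`-linear one,
given that it commutes with scalar multiplication by complex numbers. -/
def complexifyCLM {E : Type*} [NormedAddCommGroup E] [NormedSpace ℝ E]
    (T : 𝓢(E, ℂ) →L[ℝ] 𝓢(E, ℂ)) (h : ∀ (c : ℂ) (f : 𝓢(E, ℂ)), T (c • f) = c • T f) :
    𝓢(E, ℂ) →L[ℂ] 𝓢(E, ℂ) :=
  { toFun := T
    map_add' := map_add T
    map_smul' := h
    cont := T.cont }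

/-- Multiplication by a fixed function of temperate growth, as a continuous `ℂ`-linear map
on Schwartz space. -/
def mulCLM {E : Type*} [NormedAddCommGroup E] [NormedSpace ℝ E]
    {g : E → ℂ} (hg : g.HasTemperateGrowth) : 𝓢(E, ℂ) →L[ℂ] 𝓢(E, ℂ) :=
  complexifyCLM (SchwartzMap.bilinLeftCLM (ContinuousLinearMap.mul ℝ ℂ) hg)
    (fun c f => by
      ext x
      show ((c • f) x) * g x = c • (f x * g x)
      simp [mul_assoc])

lemma mulCLM_apply {E : Type*} [NormedAddCommGroup E] [NormedSpace ℝ E]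
    {g : E → ℂ} (hg : g.HasTemperateGrowth) (f : 𝓢(E, ℂ)) (x : E) :
    mulCLM hg f x = f x * g x := rfl

/-- A Schwartz function has temperate growth. -/
lemma schwartz_hasTemperateGrowth {E : Type*} [NormedAddCommGroup E] [NormedSpace ℝ E]
    (f : 𝓢(E, ℂ)) : Function.HasTemperateGrowth ⇑f := by
  refine ⟨f.smooth', fun n => ⟨0, (SchwartzMap.seminorm ℝ 0 n) f, fun x => ?_⟩⟩
  simpa using f.norm_iteratedFDeriv_le_seminorm ℝ n x

lemma hasTemperateGrowth_coord1 : Function.HasTemperateGrowth (fun v : ℝ × ℝ => (v.1 : ℂ)) :=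
  (Complex.ofRealCLM.comp (ContinuousLinearMap.fst ℝ ℝ ℝ)).hasTemperateGrowth

lemma hasTemperateGrowth_coord2 : Function.HasTemperateGrowth (fun v : ℝ × ℝ => (v.2 : ℂ)) :=
  (Complex.ofRealCLM.comp (ContinuousLinearMap.snd ℝ ℝ ℝ)).hasTemperateGrowth

lemma hasTemperateGrowth_coord : Function.HasTemperateGrowth (fun x : ℝ => (x : ℂ)) :=
  Complex.ofRealCLM.hasTemperateGrowth

/-- Tempered distributions on `ℝ`. -/
abbrev TD1 : Type := 𝓢(ℝ, ℂ) →L[ℂ] ℂ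

/-- Tempered distributions on `ℝ²`. -/
abbrev TD2 : Type := 𝓢(ℝ × ℝ, ℂ) →L[ℂ] ℂ

/-- The canonical image of a Schwartz function in the tempered distributions,
`φ ↦ (ψ ↦ ∫ φ ψ)`. -/
def toDist1 (f : 𝓢(ℝ, ℂ)) : TD1 :=
  (SchwartzMap.integralCLM ℂ (volume : Measure ℝ)).comp (mulCLM (schwartz_hasTemperateGrowth f))

/-- A tempered distribution on `ℝ` "is" a Schwartz function. -/
def IsSchwartz1 (u : TD1) : Prop := ∃ f : 𝓢(ℝ, ℂ), ∀ ψ : 𝓢(ℝ, ℂ), u ψ = ∫ x : ℝ, f x * ψ x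

/-- A tempered distribution on `ℝ²` "is" a Schwartz function. -/
def IsSchwartz2 (u : TD2) : Prop :=
  ∃ f : 𝓢(ℝ × ℝ, ℂ), ∀ ψ : 𝓢(ℝ × ℝ, ℂ), u ψ = ∫ v : ℝ × ℝ, f v * ψ v

/-- An operator on tempered distributions is regular if `B u` Schwartz implies `u` Schwartz. -/
def IsRegular1 (B : TD1 → TD1) : Prop := ∀ u : TD1, IsSchwartz1 (B u) → IsSchwartz1 u

/-- An operator on tempered distributions on `ℝ²` is regular if `B u` Schwartz implies
`u` Schwartz. -/
def IsRegular2 (B : TD2 → TD2) : Prop := ∀ u : TD2, IsSchwartz2 (B u) → IsSchwartz2 u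

/-- Multiplication by `x`, on tempered distributions on `ℝ`: `⟨xu, φ⟩ = ⟨u, xφ⟩`. -/
def opM (u : TD1) : TD1 := u.comp (mulCLM hasTemperateGrowth_coord)

/-- `D = -i d/dx` on tempered distributions on `ℝ`: `⟨Du, φ⟩ = -⟨u, Dφ⟩`. -/
def opD (u : TD1) : TD1 := Complex.I • (u.comp ((LineDeriv.lineDerivOpCLM ℂ 𝓢(ℝ, ℂ) (1 : ℝ) : 𝓢(ℝ, ℂ) →L[ℂ] 𝓢(ℝ, ℂ))))

/-- Multiplication by the first coordinate on tempered distributions on `ℝ²`. -/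
def opM1 (u : TD2) : TD2 := u.comp (mulCLM hasTemperateGrowth_coord1)

/-- Multiplication by the second coordinate on tempered distributions on `ℝ²`. -/
def opM2 (u : TD2) : TD2 := u.comp (mulCLM hasTemperateGrowth_coord2)

/-- `D₁ = -i ∂ₓ` on tempered distributions on `ℝ²`. -/
def opD1 (u : TD2) : TD2 := Complex.I • (u.comp ((LineDeriv.lineDerivOpCLM ℂ 𝓢(ℝ × ℝ, ℂ) ((1, 0) : ℝ × ℝ) :
    𝓢(ℝ × ℝ, ℂ) →L[ℂ] 𝓢(ℝ × ℝ, ℂ))))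

/-- `D₂ = -i ∂_y` on tempered distributions on `ℝ²`. -/
def opD2 (u : TD2) : TD2 := Complex.I • (u.comp ((LineDeriv.lineDerivOpCLM ℂ 𝓢(ℝ × ℝ, ℂ) ((0, 1) : ℝ × ℝ) :
    𝓢(ℝ × ℝ, ℂ) →L[ℂ] 𝓢(ℝ × ℝ, ℂ))))

/-- The set of pairs `(j, k)` of exponents with `j + k ≤ m`. -/
def idxSet (m : ℕ) : Finset (ℕ × ℕ) :=
  (Finset.range (m + 1) ×ˢ Finset.range (m + 1)).filter (fun jk => jk.1 + jk.2 ≤ m)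

/-- The polynomial symbol `a(x,ξ) = Σ_{j+k≤m} c_{jk} x^j ξ^k` as a function on `ℝ²`. -/
def symbolFun (m : ℕ) (c : ℕ → ℕ → ℂ) : ℝ × ℝ → ℂ :=
  fun v => ∑ jk ∈ idxSet m, c jk.1 jk.2 * (v.1 : ℂ) ^ jk.1 * (v.2 : ℂ) ^ jk.2

/-- A polynomial function `a(x,ξ)` on `ℝ×ℝ` is hypo-elliptic if it does not vanish outside a
compact set and `(|∂ₓ a| + |∂_ξ a|)/|a| → 0` as `|x| + |ξ| → ∞`. -/
def IsHypoelliptic (a : ℝ × ℝ → ℂ) : Prop :=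
  (∃ K : Set (ℝ × ℝ), IsCompact K ∧ ∀ v ∉ K, a v ≠ 0) ∧
    Tendsto (fun v : ℝ × ℝ => (‖fderiv ℝ a v (1, 0)‖ + ‖fderiv ℝ a v (0, 1)‖) / ‖a v‖)
      (comap (fun v : ℝ × ℝ => |v.1| + |v.2|) atTop) (nhds 0)

/-- The differential operator `A = Σ_{j+k≤m} c_{jk} M^j D^k` on tempered distributions
on `ℝ`. -/
def opA (m : ℕ) (c : ℕ → ℕ → ℂ) (u : TD1) : TD1 :=
  ∑ jk ∈ idxSet m, c jk.1 jk.2 • opM^[jk.1] (opD^[jk.2] u)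



-- function-level operators on ℝ → ℂ and ℝ × ℝ → ℂ

/-- `D = -i d/dx` acting on functions `ℝ → ℂ`. -/
def cD (u : ℝ → ℂ) : ℝ → ℂ := fun x => -Complex.I * deriv u x

/-- `D₁ = -i ∂ₓ` acting on functions `ℝ × ℝ → ℂ`. -/
def cD1 (f : ℝ × ℝ → ℂ) : ℝ × ℝ → ℂ := fun v => -Complex.I * fderiv ℝ f v (1, 0)

/-- `D₂ = -i ∂_y` acting on functions `ℝ × ℝ → ℂ`. -/
def cD2 (f : ℝ × ℝ → ℂ) : ℝ × ℝ → ℂ := fun v => -Complex.I * fderiv ℝ f v (0, 1)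

/-- The Wigner-like transform with parameter `p`:
`Wig_p[f](x,y) = (2π)^{-1/2} ∫ e^{-izy} f(x+(1-p)z, x-pz) dz`. -/
def Wig (p : ℝ) (f : ℝ × ℝ → ℂ) : ℝ × ℝ → ℂ := fun v =>
  (((2 * Real.pi) ^ (-(1/2 : ℝ)) : ℝ) : ℂ) *
    ∫ z : ℝ, Complex.exp (-(Complex.I * z * v.2)) * f (v.1 + (1 - p) * z, v.1 - p * z)

-- Weyl-Wick transform on polynomials

open MvPolynomial in
/-- `∂ₓ` on complex polynomials in two variables, as an endomorphism. -/
def pdX : Module.End ℂ (MvPolynomial (Fin 2) ℂ) := (MvPolynomial.pderiv 0).toLinearMap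

open MvPolynomial in
/-- `∂_ξ` on complex polynomials in two variables, as an endomorphism. -/
def pdXi : Module.End ℂ (MvPolynomial (Fin 2) ℂ) := (MvPolynomial.pderiv 1).toLinearMap

/-- The Laplacian `Δ = ∂ₓ² + ∂_ξ²` on complex polynomials in two variables. -/
def pLap : Module.End ℂ (MvPolynomial (Fin 2) ℂ) := pdX ^ 2 + pdXi ^ 2

/-- The Weyl-Wick transform
`W[a] = Σ_{n≥0} ((-1)^n/(4^n n!)) Δ^n Σ_{l≥0} ((-i)^l/(2^l l!)) ∂ₓ^l ∂_ξ^l a`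
(all sums are finite on polynomials). -/
def weylWick (a : MvPolynomial (Fin 2) ℂ) : MvPolynomial (Fin 2) ℂ :=
  ∑ n ∈ Finset.range (a.totalDegree + 1), (((-1 : ℂ) ^ n / (4 ^ n * n.factorial)) •
    (pLap ^ n) (∑ l ∈ Finset.range (a.totalDegree + 1),
      (((-Complex.I) ^ l / (2 ^ l * l.factorial)) • (pdX ^ l) ((pdXi ^ l) a))))

/-- The inverse Weyl-Wick transform
`W⁻¹[a] = Σ_{l≥0} (i^l/(2^l l!)) ∂ₓ^l ∂_ξ^l Σ_{n≥0} (1/(4^n n!)) Δ^n a`. -/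
def weylWickInv (a : MvPolynomial (Fin 2) ℂ) : MvPolynomial (Fin 2) ℂ :=
  ∑ l ∈ Finset.range (a.totalDegree + 1), ((Complex.I ^ l / (2 ^ l * l.factorial)) •
    (pdX ^ l) ((pdXi ^ l) (∑ n ∈ Finset.range (a.totalDegree + 1),
      ((1 / (4 ^ n * n.factorial) : ℂ) • (pLap ^ n) a))))

/-- Evaluation of a complex polynomial in two variables at a point of `ℝ²`. -/
def evalP (a : MvPolynomial (Fin 2) ℂ) (v : ℝ × ℝ) : ℂ :=
  MvPolynomial.eval ![(v.1 : ℂ), (v.2 : ℂ)] a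

/-- The polynomial `Σ_{j+k≤m} c_{jk} x^j ξ^k`. -/
def polyOf (m : ℕ) (c : ℕ → ℕ → ℂ) : MvPolynomial (Fin 2) ℂ :=
  ∑ jk ∈ (Finset.range (m + 1) ×ˢ Finset.range (m + 1)).filter (fun jk => jk.1 + jk.2 ≤ m),
    MvPolynomial.C (c jk.1 jk.2) * MvPolynomial.X 0 ^ jk.1 * MvPolynomial.X 1 ^ jk.2

/-- The coherent state `Φ_{y,η}(x) = π^{-1/4} e^{ixη} e^{-(y-x)²/2}`. -/
def coherent (y η : ℝ) : ℝ → ℂ :=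
  fun t => ((Real.pi ^ (-(1/4 : ℝ)) : ℝ) : ℂ) * Complex.exp (Complex.I * t * η) *
    ((Real.exp (-((y - t) ^ 2) / 2) : ℝ) : ℂ)

/-! With `X` the position operator and `D = -i d/dx` the momentum operator, both are symmetric
on `S(ℝ) ⊂ L²` and `D X = X D - i`. Hence `(Au | u)` equals
`a₂‖Xu‖² + a₁ (Xu | u) + a₀‖u‖² + 2b₁ Re (Xu | Du) + 2b₀ Re (u | Du) + c₀‖Du‖²`, a real number:
`(u | Xu)` and `(u | Du)` are real and `Im (Xu | Du) = ‖u‖²/2` absorbs the term `-ib₁‖u‖²`.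
With `α = a₂ - r₁²` this is the sum of squares
`‖r₁Xu + s₁Du‖² + ‖r₀u + s₀Du‖² + α‖Xu + (a₁/2α) u‖² + (c₀ - s₀² - s₁²)‖Du‖²`
plus `(a₀ - r₀² - a₁²/4α) ‖u‖²`. -/

open ComplexConjugate

lemma norm_ofReal_smul_add_sq {𝕜 E : Type*} [RCLike 𝕜] [NormedAddCommGroup E]
    [InnerProductSpace 𝕜 E] (a b : ℝ) (x y : E) :
    ‖(a : 𝕜) • x + (b : 𝕜) • y‖ ^ 2
      = a ^ 2 * ‖x‖ ^ 2 + 2 * (a * b) * RCLike.re (inner 𝕜 x y) + b ^ 2 * ‖y‖ ^ 2 := by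
  rw [norm_add_sq (𝕜 := 𝕜), inner_smul_left, inner_smul_right, norm_smul, norm_smul]
  simp only [RCLike.conj_ofReal, RCLike.norm_ofReal, ← mul_assoc, ← RCLike.ofReal_mul,
    RCLike.re_ofReal_mul, mul_pow, sq_abs]

lemma quadratic_form_lower_bound {𝕜 E : Type*} [RCLike 𝕜] [NormedAddCommGroup E]
    [InnerProductSpace 𝕜 E] (a₂ a₁ a₀ c₀ r₁ r₀ s₁ s₀ : ℝ) (hs : s₀ ^ 2 + s₁ ^ 2 ≤ c₀)
    (hr : 0 < a₂ - r₁ ^ 2) (v y w : E) :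
    (4 * (a₀ - r₀ ^ 2) * (a₂ - r₁ ^ 2) - a₁ ^ 2) / (4 * (a₂ - r₁ ^ 2)) * ‖v‖ ^ 2
      ≤ a₂ * ‖y‖ ^ 2 + a₁ * RCLike.re (inner 𝕜 v y) + a₀ * ‖v‖ ^ 2
        + 2 * (r₁ * s₁) * RCLike.re (inner 𝕜 y w) + 2 * (r₀ * s₀) * RCLike.re (inner 𝕜 v w)
        + c₀ * ‖w‖ ^ 2 := by
  set α := a₂ - r₁ ^ 2
  set t := a₁ / (2 * α)
  have hαt : α * t = a₁ / 2 := by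
    simp only [t]
    field_simp
  have hbound : (4 * (a₀ - r₀ ^ 2) * α - a₁ ^ 2) / (4 * α) = a₀ - r₀ ^ 2 - α * t ^ 2 := by
    simp only [t]
    field_simp
    ring
  rw [hbound, inner_re_symm (𝕜 := 𝕜) v y]
  have hP := norm_ofReal_smul_add_sq (𝕜 := 𝕜) r₁ s₁ y w
  have hQ := norm_ofReal_smul_add_sq (𝕜 := 𝕜) r₀ s₀ v w
  have hR := norm_ofReal_smul_add_sq (𝕜 := 𝕜) 1 t y v
  have hP_nonneg := sq_nonneg ‖(r₁ : 𝕜) • y + (s₁ : 𝕜) • w‖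
  have hQ_nonneg := sq_nonneg ‖(r₀ : 𝕜) • v + (s₀ : 𝕜) • w‖
  have hR_nonneg := mul_nonneg hr.le (sq_nonneg ‖((1 : ℝ) : 𝕜) • y + (t : 𝕜) • v‖)
  have hw_nonneg := mul_nonneg (sub_nonneg.2 hs) (sq_nonneg ‖w‖)
  linear_combination hP_nonneg + hQ_nonneg + hR_nonneg + hw_nonneg + hP + hQ + α * hR
    + 2 * RCLike.re (inner 𝕜 y v) * hαt

lemma inner_self_eq_ofReal_norm_sq {H : Type*} [NormedAddCommGroup H] [InnerProductSpace ℂ H]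
    (x : H) : inner ℂ x x = ((‖x‖ ^ 2 : ℝ) : ℂ) := by
  rw [inner_self_eq_norm_sq_to_K]
  norm_cast

namespace SchwartzMap

def position : 𝓢(ℝ, ℂ) →L[ℂ] 𝓢(ℝ, ℂ) := mulCLM hasTemperateGrowth_coord

def momentum : 𝓢(ℝ, ℂ) →L[ℂ] 𝓢(ℝ, ℂ) := -I • derivCLM ℂ ℂ

local notation "ι" => toLpCLM ℂ ℂ 2 (volume : Measure ℝ)

lemma position_apply (f : 𝓢(ℝ, ℂ)) (x : ℝ) : position f x = f x * x := rfl

lemma coe_position (f : 𝓢(ℝ, ℂ)) : ⇑(position f) = fun x => f x * x := rfl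

lemma momentum_apply (f : 𝓢(ℝ, ℂ)) (x : ℝ) : momentum f x = -I * deriv f x := by
  simp [momentum, derivCLM_apply]

lemma coe_momentum (f : 𝓢(ℝ, ℂ)) : ⇑(momentum f) = cD f :=
  funext (momentum_apply f)

lemma momentum_position (f : 𝓢(ℝ, ℂ)) :
    momentum (position f) = position (momentum f) - I • f := by
  ext x
  have h : HasDerivAt (fun y : ℝ => f y * y) (deriv f x * x + f x * 1) x :=
    (f.hasDerivAt x).mul (hasDerivAt_id x).ofReal_comp
  simp only [momentum_apply, position_apply, sub_apply, smul_apply, smul_eq_mul, coe_position,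
    h.deriv]
  ring

lemma inner_toLp_eq_integral (f g : 𝓢(ℝ, ℂ)) :
    inner ℂ (ι f) (ι g) = ∫ x, g x * conj (f x) := by
  simp [inner_toL2_toL2_eq]

lemma integral_norm_sq_eq_norm_toLp_sq (f : 𝓢(ℝ, ℂ)) : ∫ x, ‖f x‖ ^ 2 = ‖ι f‖ ^ 2 := by
  rw [@norm_sq_eq_re_inner ℂ, inner_toLp_eq_integral]
  simp only [mul_conj, normSq_eq_norm_sq]
  norm_cast

lemma inner_position_left (f g : 𝓢(ℝ, ℂ)) :
    inner ℂ (ι (position f)) (ι g) = inner ℂ (ι f) (ι (position g)) := by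
  simp only [inner_toLp_eq_integral, position_apply, map_mul, conj_ofReal]
  congr 1 with x
  ring

lemma inner_momentum_left (f g : 𝓢(ℝ, ℂ)) :
    inner ℂ (ι (momentum f)) (ι g) = inner ℂ (ι f) (ι (momentum g)) := by
  have h : ∫ x, conj (f x) * deriv g x = -∫ x, conj (deriv f x) * g x :=
    integral_bilinear_deriv_right_eq_neg_left f g
      (ContinuousLinearMap.mul ℝ ℂ ∘L (conjCLE : ℂ →L[ℝ] ℂ))
  simp only [inner_toLp_eq_integral, momentum_apply, map_mul, map_neg, conj_I, neg_neg]
  calc ∫ x, g x * (I * conj (deriv f x)) = I * ∫ x, conj (deriv f x) * g x := by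
        rw [← integral_const_mul]; congr 1 with x; ring
    _ = -I * ∫ x, conj (f x) * deriv g x := by rw [h]; ring
    _ = ∫ x, -I * deriv g x * conj (f x) := by
        rw [← integral_const_mul]; congr 1 with x; ring

lemma im_inner_position (f : 𝓢(ℝ, ℂ)) : (inner ℂ (ι f) (ι (position f))).im = 0 := by
  rw [← conj_eq_iff_im, inner_conj_symm, inner_position_left]

lemma im_inner_momentum (f : 𝓢(ℝ, ℂ)) : (inner ℂ (ι f) (ι (momentum f))).im = 0 := by
  rw [← conj_eq_iff_im, inner_conj_symm, inner_momentum_left]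

lemma im_inner_position_momentum (f : 𝓢(ℝ, ℂ)) :
    (inner ℂ (ι (position f)) (ι (momentum f))).im = ‖ι f‖ ^ 2 / 2 := by
  have h : inner ℂ (ι (position f)) (ι (momentum f))
      = conj (inner ℂ (ι (position f)) (ι (momentum f))) + I * inner ℂ (ι f) (ι f) := by
    rw [inner_conj_symm, ← inner_momentum_left, momentum_position, map_sub, map_smul,
      inner_sub_left, inner_smul_left, inner_position_left, conj_I]
    ring
  have h_norm : (inner ℂ (ι f) (ι f)).re = ‖ι f‖ ^ 2 := inner_self_eq_norm_sq (𝕜 := ℂ) _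
  have h_im := congrArg im h
  rw [add_im, conj_im, I_mul_im, h_norm] at h_im
  linarith

/-- The operator `A` of the theorem, with `x` acting as `position` and `D` as `momentum`. -/
def quadraticOp (a₂ a₁ a₀ b₁ b₀ c₀ : ℝ) : 𝓢(ℝ, ℂ) →L[ℂ] 𝓢(ℝ, ℂ) :=
  (a₂ : ℂ) • (position ∘L position) + (a₁ : ℂ) • position
    + ((a₀ : ℂ) - I * b₁) • ContinuousLinearMap.id ℂ _ + (2 * b₁ : ℂ) • (position ∘L momentum)
    + (2 * b₀ : ℂ) • momentum + (c₀ : ℂ) • (momentum ∘L momentum)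

lemma integral_eq_inner_quadraticOp (a₂ a₁ a₀ b₁ b₀ c₀ : ℝ) (u : 𝓢(ℝ, ℂ)) :
    ∫ x : ℝ, (((a₂ * x ^ 2 + a₁ * x + a₀ : ℝ) : ℂ) - I * (b₁ : ℂ)) * u x * conj (u x)
      + 2 * ((b₁ * x + b₀ : ℝ) : ℂ) * cD (⇑u) x * conj (u x)
      + (c₀ : ℂ) * cD (cD ⇑u) x * conj (u x)
    = inner ℂ (ι u) (ι (quadraticOp a₂ a₁ a₀ b₁ b₀ c₀ u)) := by
  rw [inner_toLp_eq_integral]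
  simp only [← coe_momentum]
  congr 1 with x
  simp only [quadraticOp, _root_.add_apply, _root_.smul_apply,
    ContinuousLinearMap.comp_apply, ContinuousLinearMap.id_apply, smul_eq_mul, position_apply]
  push_cast
  ring

lemma inner_quadraticOp (a₂ a₁ a₀ b₁ b₀ c₀ : ℝ) (u : 𝓢(ℝ, ℂ)) :
    inner ℂ (ι u) (ι (quadraticOp a₂ a₁ a₀ b₁ b₀ c₀ u))
      = ((a₂ * ‖ι (position u)‖ ^ 2 + a₁ * (inner ℂ (ι u) (ι (position u))).re + a₀ * ‖ι u‖ ^ 2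
        + 2 * b₁ * (inner ℂ (ι (position u)) (ι (momentum u))).re
        + 2 * b₀ * (inner ℂ (ι u) (ι (momentum u))).re + c₀ * ‖ι (momentum u)‖ ^ 2 : ℝ) : ℂ) := by
  simp only [quadraticOp, _root_.add_apply, _root_.smul_apply,
    ContinuousLinearMap.comp_apply, ContinuousLinearMap.id_apply, map_add, map_smul,
    inner_add_right, inner_smul_right]
  rw [← inner_position_left u (position u), ← inner_position_left u (momentum u),
    ← inner_momentum_left u (momentum u), inner_self_eq_ofReal_norm_sq,
    inner_self_eq_ofReal_norm_sq, inner_self_eq_ofReal_norm_sq]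
  apply Complex.ext <;>
    simp only [add_re, add_im, mul_re, mul_im, sub_re, sub_im, ofReal_re, ofReal_im, I_re, I_im,
      re_ofNat, im_ofNat, im_inner_position, im_inner_momentum, im_inner_position_momentum] <;>
    ring

end SchwartzMap

theorem statement7_general (a₂ a₁ a₀ b₁ b₀ c₀ r₁ r₀ s₁ s₀ : ℝ)
    (hb₁ : b₁ = r₁ * s₁) (hb₀ : b₀ = r₀ * s₀) (hs : s₀ ^ 2 + s₁ ^ 2 ≤ c₀)
    (hr : 0 < a₂ - r₁ ^ 2)
    (u : 𝓢(ℝ, ℂ)) :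
    (∫ x : ℝ, (((a₂ * x ^ 2 + a₁ * x + a₀ : ℝ) : ℂ) - Complex.I * (b₁ : ℂ)) * u x
        * (starRingEnd ℂ) (u x)
      + 2 * ((b₁ * x + b₀ : ℝ) : ℂ) * cD (⇑u) x * (starRingEnd ℂ) (u x)
      + (c₀ : ℂ) * cD (cD ⇑u) x * (starRingEnd ℂ) (u x)).im = 0 ∧
    ((4 * (a₀ - r₀ ^ 2) * (a₂ - r₁ ^ 2) - a₁ ^ 2) / (4 * (a₂ - r₁ ^ 2))) * (∫ x : ℝ, ‖u x‖ ^ 2)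
      ≤ (∫ x : ℝ, (((a₂ * x ^ 2 + a₁ * x + a₀ : ℝ) : ℂ) - Complex.I * (b₁ : ℂ)) * u x
          * (starRingEnd ℂ) (u x)
        + 2 * ((b₁ * x + b₀ : ℝ) : ℂ) * cD (⇑u) x * (starRingEnd ℂ) (u x)
        + (c₀ : ℂ) * cD (cD ⇑u) x * (starRingEnd ℂ) (u x)).re := by
  rw [integral_eq_inner_quadraticOp, inner_quadraticOp, ofReal_im, ofReal_re,
    integral_norm_sq_eq_norm_toLp_sq, hb₁, hb₀]
  exact ⟨rfl, quadratic_form_lower_bound (𝕜 := ℂ) a₂ a₁ a₀ c₀ r₁ r₀ s₁ s₀ hs hr _ _ _⟩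

/-- Under the stated conditions on the real coefficients, for the operator
`A = (a₂x² + a₁x + a₀ - ib₁) + 2(b₁x + b₀)D + c₀D²` on `S(ℝ)`, the quantity `(Au | u)_{L²}` is
real and bounded below by `[(4(a₀-r₀²)(a₂-r₁²) - a₁²)/(4(a₂-r₁²))] ‖u‖²_{L²}`. -/
theorem statement7 (a₂ a₁ a₀ b₁ b₀ c₀ r₁ r₀ s₁ s₀ : ℝ)
    (hb₁ : b₁ = r₁ * s₁) (hb₀ : b₀ = r₀ * s₀) (hs : s₀ ^ 2 + s₁ ^ 2 ≤ c₀)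
    (hr : 0 < a₂ - r₁ ^ 2) (hdisc : a₁ ^ 2 < 4 * (a₂ - r₁ ^ 2) * (a₀ - r₀ ^ 2))
    (u : 𝓢(ℝ, ℂ)) :
    (∫ x : ℝ, (((a₂ * x ^ 2 + a₁ * x + a₀ : ℝ) : ℂ) - Complex.I * (b₁ : ℂ)) * u x
        * (starRingEnd ℂ) (u x)
      + 2 * ((b₁ * x + b₀ : ℝ) : ℂ) * cD (⇑u) x * (starRingEnd ℂ) (u x)
      + (c₀ : ℂ) * cD (cD ⇑u) x * (starRingEnd ℂ) (u x)).im = 0 ∧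
    ((4 * (a₀ - r₀ ^ 2) * (a₂ - r₁ ^ 2) - a₁ ^ 2) / (4 * (a₂ - r₁ ^ 2))) * (∫ x : ℝ, ‖u x‖ ^ 2)
      ≤ (∫ x : ℝ, (((a₂ * x ^ 2 + a₁ * x + a₀ : ℝ) : ℂ) - Complex.I * (b₁ : ℂ)) * u x
          * (starRingEnd ℂ) (u x)
        + 2 * ((b₁ * x + b₀ : ℝ) : ℂ) * cD (⇑u) x * (starRingEnd ℂ) (u x)
        + (c₀ : ℂ) * cD (cD ⇑u) x * (starRingEnd ℂ) (u x)).re :=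
  statement7_general a₂ a₁ a₀ b₁ b₀ c₀ r₁ r₀ s₁ s₀ hb₁ hb₀ hs hr u
end
end

section
/- The Weyl-Wick transform W maps polynomials of total degree m to polynomials of total degree m and is a linear bijection of the space of complex polynomials in two variables onto itself; its inverse is given by W⁻¹[a] = Σ_{l≥0} (i^l/(2^l l!)) ∂ₓ^l ∂ξ^l Σ_{n≥0} (1/(4^n n!)) Δ^n a, i.e., W⁻¹[W[a]] = a and W[W⁻¹[a]] = a for every polynomial a. -/
open MeasureTheory SchwartzMap Complex Filter

noncomputable section




/-! `∂ₓ∂_ξ` and `Δ` strictly lower the total degree, so they are locally nilpotent on polynomials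
and `W = e^{-Δ/4} e^{-i∂ₓ∂_ξ/2}`, `W⁻¹ = e^{i∂ₓ∂_ξ/2} e^{Δ/4}` are exponential series which,
cut off at any order `N` at least the degree, act exactly on polynomials of degree at most `N`.
Since `e^{zX} e^{-zX} = 1` as power series, the product of the two cut-off series is `1` modulo
`X^{N+1}`, so `e^{zT}` and `e^{-zT}` are mutually inverse on polynomials of degree at most `N`.
In `W⁻¹ W` and `W W⁻¹` these cancellations nest from the inside out, and since no factor raises
the degree, `W` preserves it. -/

namespace MvPolynomial

variable {σ R : Type*} [CommSemiring R]

theorem totalDegree_pderiv_lt {i : σ} {p : MvPolynomial σ R} (h : pderiv i p ≠ 0) :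
    (pderiv i p).totalDegree < p.totalDegree := by
  have key : ∀ m ∈ (pderiv i p).support, (m.sum fun _ e => e) < p.totalDegree := by
    intro m hm
    rw [mem_support_iff, coeff_pderiv] at hm
    have := le_totalDegree (mem_support_iff.mpr (left_ne_zero_of_mul hm))
    rw [Finsupp.sum_add_index' (fun _ => rfl) (fun _ _ _ => rfl),
      Finsupp.sum_single_index rfl] at this
    omega
  obtain ⟨m, hm⟩ := support_nonempty.mpr h
  exact (Finset.sup_lt_iff ((Nat.zero_le _).trans_lt (key m hm))).mpr key

theorem pderiv_pderiv_comm (i j : σ) (p : MvPolynomial σ R) :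
    pderiv i (pderiv j p) = pderiv j (pderiv i p) := by
  classical
  obtain rfl | hij := eq_or_ne i j
  · rfl
  induction p using MvPolynomial.induction_on' with
  | monomial s a =>
    simp only [pderiv_monomial, Finsupp.tsub_apply, Finsupp.single_eq_of_ne hij,
      Finsupp.single_eq_of_ne hij.symm, tsub_zero]
    rw [tsub_right_comm, mul_right_comm]
  | add p q hp hq => simp only [map_add, hp, hq]

def LowersTotalDegree (T : Module.End R (MvPolynomial σ R)) : Prop :=
  ∀ p, T p ≠ 0 → (T p).totalDegree < p.totalDegree

theorem lowersTotalDegree_pderiv (i : σ) : LowersTotalDegree (pderiv (R := R) i).toLinearMap :=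
  fun _ => totalDegree_pderiv_lt

namespace LowersTotalDegree

variable {T S : Module.End R (MvPolynomial σ R)}

theorem totalDegree_apply_le (hT : LowersTotalDegree T) (p : MvPolynomial σ R) :
    (T p).totalDegree ≤ p.totalDegree := by
  by_cases h : T p = 0
  · simp [h]
  · exact (hT p h).le

theorem totalDegree_apply_lt (hT : LowersTotalDegree T) {p : MvPolynomial σ R}
    (hp : 0 < p.totalDegree) : (T p).totalDegree < p.totalDegree := by
  by_cases h : T p = 0
  · simpa [h]
  · exact hT p h

theorem mul (hT : LowersTotalDegree T) (hS : LowersTotalDegree S) : LowersTotalDegree (T * S) := by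
  intro p h
  have hSp : S p ≠ 0 := fun h0 => h (by rw [Module.End.mul_apply, h0, map_zero])
  exact (hT _ h).trans (hS _ hSp)

theorem add (hT : LowersTotalDegree T) (hS : LowersTotalDegree S) : LowersTotalDegree (T + S) := by
  intro p h
  have hpos : 0 < p.totalDegree := by
    by_cases hTp : T p = 0
    · have hSp : S p ≠ 0 := by simpa [hTp] using h
      exact (Nat.zero_le _).trans_lt (hS p hSp)
    · exact (Nat.zero_le _).trans_lt (hT p hTp)
  exact (totalDegree_add _ _).trans_lt
    (max_lt (hT.totalDegree_apply_lt hpos) (hS.totalDegree_apply_lt hpos))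

theorem pow_apply_eq_zero (hT : LowersTotalDegree T) {n : ℕ} {p : MvPolynomial σ R}
    (hp : p.totalDegree < n) : (T ^ n) p = 0 := by
  induction n generalizing p with
  | zero => omega
  | succ n ih =>
    rw [pow_succ, Module.End.mul_apply]
    by_cases h : T p = 0
    · rw [h, map_zero]
    · exact ih ((hT p h).trans_le (Nat.lt_succ_iff.mp hp))

theorem totalDegree_pow_apply_le (hT : LowersTotalDegree T) (n : ℕ) (p : MvPolynomial σ R) :
    ((T ^ n) p).totalDegree ≤ p.totalDegree := by
  induction n generalizing p with
  | zero => rfl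
  | succ n ih =>
    rw [pow_succ, Module.End.mul_apply]
    exact (ih _).trans (hT.totalDegree_apply_le p)

theorem totalDegree_aeval_apply_le (hT : LowersTotalDegree T) (f : Polynomial R)
    (p : MvPolynomial σ R) :
    (Polynomial.aeval T f p).totalDegree ≤ p.totalDegree := by
  rw [Polynomial.aeval_eq_sum_range, LinearMap.sum_apply]
  exact totalDegree_finsetSum_le fun n _ =>
    (totalDegree_smul_le _ _).trans (hT.totalDegree_pow_apply_le n p)

end LowersTotalDegree

end MvPolynomial

namespace Polynomial

variable {K M : Type*} [CommSemiring K] [AddCommMonoid M] [Module K M]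
  {T : Module.End K M} {x : M} {N : ℕ}

theorem aeval_apply_eq_sum_range_of_pow_apply_eq_zero (hx : (T ^ N) x = 0) (f : K[X]) :
    aeval T f x = ∑ n ∈ Finset.range N, f.coeff n • (T ^ n) x := by
  rw [aeval_eq_sum_range' (lt_max_of_lt_right (Nat.lt_succ_self f.natDegree)), LinearMap.sum_apply]
  refine (Finset.sum_subset (Finset.range_subset_range.mpr (le_max_left _ _)) fun n _ hn => ?_).symm
  rw [LinearMap.smul_apply, Module.End.pow_map_zero_of_le (by simpa using hn) hx, smul_zero]

theorem aeval_apply_eq_aeval_trunc_apply (hx : (T ^ N) x = 0) (f : K[X]) :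
    aeval T f x = aeval T (PowerSeries.trunc N (f : PowerSeries K)) x := by
  simp only [aeval_apply_eq_sum_range_of_pow_apply_eq_zero hx]
  refine Finset.sum_congr rfl fun n hn => ?_
  rw [PowerSeries.coeff_trunc, if_pos (Finset.mem_range.mp hn), coeff_coe]

end Polynomial

section TruncatedExponential

open Polynomial

variable {K M : Type*} [CommRing K] [Algebra ℚ K] [AddCommMonoid M] [Module K M]
  {T : Module.End K M} {x : M}

def truncExp (z : K) (N : ℕ) : K[X] :=
  PowerSeries.trunc (N + 1) (PowerSeries.rescale z (PowerSeries.exp K))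

theorem trunc_truncExp_mul_truncExp (N : ℕ) {z w : K} (h : z + w = 0) :
    PowerSeries.trunc (N + 1) ((truncExp z N * truncExp w N : K[X]) : PowerSeries K) = 1 := by
  rw [truncExp, truncExp, coe_mul, PowerSeries.trunc_trunc_mul_trunc,
    PowerSeries.exp_mul_exp_eq_exp_add, h, PowerSeries.rescale_zero_apply,
    PowerSeries.constantCoeff_exp, map_one, PowerSeries.trunc_one]

theorem aeval_truncExp_apply_aeval_truncExp_apply {N : ℕ} (hx : (T ^ (N + 1)) x = 0) {z w : K}
    (h : z + w = 0) : aeval T (truncExp z N) (aeval T (truncExp w N) x) = x := by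
  rw [← Module.End.mul_apply, ← map_mul, aeval_apply_eq_aeval_trunc_apply hx,
    trunc_truncExp_mul_truncExp N h, map_one, Module.End.one_apply]

theorem aeval_truncExp_apply_of_le {m n : ℕ} (hx : (T ^ (m + 1)) x = 0) (hmn : m ≤ n) (z : K) :
    aeval T (truncExp z n) x = aeval T (truncExp z m) x := by
  rw [aeval_apply_eq_aeval_trunc_apply hx, aeval_apply_eq_aeval_trunc_apply hx (truncExp z m),
    truncExp, truncExp, PowerSeries.trunc_trunc_of_le _ (Nat.succ_le_succ hmn),
    PowerSeries.trunc_trunc]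

end TruncatedExponential

theorem aeval_truncExp_apply {K M : Type*} [Field K] [CharZero K] [AddCommMonoid M] [Module K M]
    (T : Module.End K M) (z : K) (N : ℕ) (x : M) :
    Polynomial.aeval T (truncExp z N) x =
      ∑ n ∈ Finset.range (N + 1), (z ^ n / n.factorial) • (T ^ n) x := by
  rw [truncExp, Polynomial.aeval_eq_sum_range' (PowerSeries.natDegree_trunc_lt _ N),
    LinearMap.sum_apply]
  refine Finset.sum_congr rfl fun n hn => ?_
  rw [PowerSeries.coeff_trunc, if_pos (Finset.mem_range.mp hn), PowerSeries.coeff_rescale,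
    PowerSeries.coeff_exp, LinearMap.smul_apply]
  simp [div_eq_mul_inv]

namespace MvPolynomial.LowersTotalDegree

variable {σ K : Type*} [CommRing K] [Algebra ℚ K] {T : Module.End K (MvPolynomial σ K)}
  {p : MvPolynomial σ K}

theorem aeval_truncExp_apply_of_le (hT : LowersTotalDegree T) {m n : ℕ} (hp : p.totalDegree ≤ m)
    (hmn : m ≤ n) (z : K) :
    Polynomial.aeval T (truncExp z n) p = Polynomial.aeval T (truncExp z m) p :=
  _root_.aeval_truncExp_apply_of_le (hT.pow_apply_eq_zero (Nat.lt_succ_of_le hp)) hmn z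

theorem aeval_truncExp_apply_aeval_truncExp_apply (hT : LowersTotalDegree T) {n : ℕ}
    (hp : p.totalDegree ≤ n) {z w : K} (h : z + w = 0) :
    Polynomial.aeval T (truncExp z n) (Polynomial.aeval T (truncExp w n) p) = p :=
  _root_.aeval_truncExp_apply_aeval_truncExp_apply
    (hT.pow_apply_eq_zero (Nat.lt_succ_of_le hp)) h

end MvPolynomial.LowersTotalDegree

section WeylWick

open MvPolynomial

theorem commute_pdX_pdXi : Commute pdX pdXi :=
  LinearMap.ext fun p => pderiv_pderiv_comm 0 1 p

theorem lowersTotalDegree_pdX_mul_pdXi : LowersTotalDegree (pdX * pdXi) :=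
  (lowersTotalDegree_pderiv 0).mul (lowersTotalDegree_pderiv 1)

theorem lowersTotalDegree_pLap : LowersTotalDegree pLap := by
  rw [pLap, sq, sq]
  exact ((lowersTotalDegree_pderiv 0).mul (lowersTotalDegree_pderiv 0)).add
    ((lowersTotalDegree_pderiv 1).mul (lowersTotalDegree_pderiv 1))

def weylWickOp (N : ℕ) : Module.End ℂ (MvPolynomial (Fin 2) ℂ) :=
  Polynomial.aeval pLap (truncExp (-1 / 4 : ℂ) N) *
    Polynomial.aeval (pdX * pdXi) (truncExp (-I / 2) N)

def weylWickInvOp (N : ℕ) : Module.End ℂ (MvPolynomial (Fin 2) ℂ) :=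
  Polynomial.aeval (pdX * pdXi) (truncExp (I / 2) N) *
    Polynomial.aeval pLap (truncExp (1 / 4 : ℂ) N)

theorem totalDegree_weylWickOp_apply_le (N : ℕ) (a : MvPolynomial (Fin 2) ℂ) :
    (weylWickOp N a).totalDegree ≤ a.totalDegree :=
  (lowersTotalDegree_pLap.totalDegree_aeval_apply_le _ _).trans
    (lowersTotalDegree_pdX_mul_pdXi.totalDegree_aeval_apply_le _ _)

theorem totalDegree_weylWickInvOp_apply_le (N : ℕ) (a : MvPolynomial (Fin 2) ℂ) :
    (weylWickInvOp N a).totalDegree ≤ a.totalDegree :=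
  (lowersTotalDegree_pdX_mul_pdXi.totalDegree_aeval_apply_le _ _).trans
    (lowersTotalDegree_pLap.totalDegree_aeval_apply_le _ _)

theorem weylWickOp_apply_of_le {a : MvPolynomial (Fin 2) ℂ} {m n : ℕ} (ha : a.totalDegree ≤ m)
    (hmn : m ≤ n) : weylWickOp n a = weylWickOp m a := by
  simp only [weylWickOp, Module.End.mul_apply]
  rw [lowersTotalDegree_pdX_mul_pdXi.aeval_truncExp_apply_of_le ha hmn,
    lowersTotalDegree_pLap.aeval_truncExp_apply_of_le
      ((lowersTotalDegree_pdX_mul_pdXi.totalDegree_aeval_apply_le _ a).trans ha) hmn]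

theorem weylWickInvOp_apply_of_le {a : MvPolynomial (Fin 2) ℂ} {m n : ℕ} (ha : a.totalDegree ≤ m)
    (hmn : m ≤ n) : weylWickInvOp n a = weylWickInvOp m a := by
  simp only [weylWickInvOp, Module.End.mul_apply]
  rw [lowersTotalDegree_pLap.aeval_truncExp_apply_of_le ha hmn,
    lowersTotalDegree_pdX_mul_pdXi.aeval_truncExp_apply_of_le
      ((lowersTotalDegree_pLap.totalDegree_aeval_apply_le _ a).trans ha) hmn]

theorem weylWick_eq_weylWickOp_apply {a : MvPolynomial (Fin 2) ℂ} {N : ℕ}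
    (ha : a.totalDegree ≤ N) : weylWick a = weylWickOp N a := by
  rw [weylWickOp_apply_of_le le_rfl ha]
  simp only [weylWickOp, Module.End.mul_apply, aeval_truncExp_apply, weylWick, div_pow, div_div,
    commute_pdX_pdXi.mul_pow]

theorem weylWickInv_eq_weylWickInvOp_apply {a : MvPolynomial (Fin 2) ℂ} {N : ℕ}
    (ha : a.totalDegree ≤ N) : weylWickInv a = weylWickInvOp N a := by
  rw [weylWickInvOp_apply_of_le le_rfl ha]
  simp only [weylWickInvOp, Module.End.mul_apply, aeval_truncExp_apply, weylWickInv, div_pow,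
    div_div, one_pow, commute_pdX_pdXi.mul_pow]

theorem totalDegree_weylWick_le (a : MvPolynomial (Fin 2) ℂ) :
    (weylWick a).totalDegree ≤ a.totalDegree := by
  rw [weylWick_eq_weylWickOp_apply le_rfl]
  exact totalDegree_weylWickOp_apply_le _ a

theorem totalDegree_weylWickInv_le (a : MvPolynomial (Fin 2) ℂ) :
    (weylWickInv a).totalDegree ≤ a.totalDegree := by
  rw [weylWickInv_eq_weylWickInvOp_apply le_rfl]
  exact totalDegree_weylWickInvOp_apply_le _ a

theorem weylWickInv_weylWick (a : MvPolynomial (Fin 2) ℂ) : weylWickInv (weylWick a) = a := by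
  rw [weylWickInv_eq_weylWickInvOp_apply (totalDegree_weylWick_le a),
    weylWick_eq_weylWickOp_apply le_rfl]
  simp only [weylWickInvOp, weylWickOp, Module.End.mul_apply]
  rw [lowersTotalDegree_pLap.aeval_truncExp_apply_aeval_truncExp_apply
      (lowersTotalDegree_pdX_mul_pdXi.totalDegree_aeval_apply_le _ a) (by ring),
    lowersTotalDegree_pdX_mul_pdXi.aeval_truncExp_apply_aeval_truncExp_apply le_rfl (by ring)]

theorem weylWick_weylWickInv (a : MvPolynomial (Fin 2) ℂ) : weylWick (weylWickInv a) = a := by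
  rw [weylWick_eq_weylWickOp_apply (totalDegree_weylWickInv_le a),
    weylWickInv_eq_weylWickInvOp_apply le_rfl]
  simp only [weylWickInvOp, weylWickOp, Module.End.mul_apply]
  rw [lowersTotalDegree_pdX_mul_pdXi.aeval_truncExp_apply_aeval_truncExp_apply
      (lowersTotalDegree_pLap.totalDegree_aeval_apply_le _ a) (by ring),
    lowersTotalDegree_pLap.aeval_truncExp_apply_aeval_truncExp_apply le_rfl (by ring)]

theorem weylWick_add (a b : MvPolynomial (Fin 2) ℂ) :
    weylWick (a + b) = weylWick a + weylWick b := by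
  rw [weylWick_eq_weylWickOp_apply (totalDegree_add a b),
    weylWick_eq_weylWickOp_apply (le_max_left _ _), weylWick_eq_weylWickOp_apply (le_max_right _ _),
    map_add]

theorem weylWick_smul (c : ℂ) (a : MvPolynomial (Fin 2) ℂ) : weylWick (c • a) = c • weylWick a := by
  rw [weylWick_eq_weylWickOp_apply (totalDegree_smul_le c a), weylWick_eq_weylWickOp_apply le_rfl,
    map_smul]

theorem totalDegree_weylWick (a : MvPolynomial (Fin 2) ℂ) :
    (weylWick a).totalDegree = a.totalDegree := by
  refine (totalDegree_weylWick_le a).antisymm ?_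
  calc a.totalDegree = (weylWickInv (weylWick a)).totalDegree := by rw [weylWickInv_weylWick]
    _ ≤ (weylWick a).totalDegree := totalDegree_weylWickInv_le _

end WeylWick

/-- The Weyl-Wick transform preserves the total degree of polynomials, is a
linear bijection of the complex polynomials in two variables onto itself, and `weylWickInv` is
its two-sided inverse. -/
theorem statement11 :
    (∀ a : MvPolynomial (Fin 2) ℂ, (weylWick a).totalDegree = a.totalDegree) ∧
    (∀ a b : MvPolynomial (Fin 2) ℂ, weylWick (a + b) = weylWick a + weylWick b) ∧
    (∀ (c : ℂ) (a : MvPolynomial (Fin 2) ℂ), weylWick (c • a) = c • weylWick a) ∧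
    Function.Bijective weylWick ∧
    (∀ a : MvPolynomial (Fin 2) ℂ, weylWickInv (weylWick a) = a) ∧
    (∀ a : MvPolynomial (Fin 2) ℂ, weylWick (weylWickInv a) = a) :=
  ⟨totalDegree_weylWick, weylWick_add, weylWick_smul,
    ⟨Function.LeftInverse.injective weylWickInv_weylWick,
      Function.RightInverse.surjective weylWick_weylWickInv⟩,
    weylWickInv_weylWick, weylWick_weylWickInv⟩

end
end

section
/- Let p ∈ ℝ. For w ∈ S(ℝ²) let (D₁w)(s,t) = −i ∂w/∂s (s,t). Then for every w ∈ S(ℝ²) and all (x,y) ∈ ℝ², Wig_p[D₁w](x,y) = y·Wig_p[w](x,y) + p·(−i ∂ₓ Wig_p[w])(x,y); that is, Wig_p[D₁w] = (M₂ + pD₁) Wig_p[w]. -/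
open MeasureTheory SchwartzMap Complex Filter

noncomputable section




/-! In the coordinates `(x, z) ↦ (x + (1 - p) z, x - p z)` the transform `Wig_p[w]` is, up to the
factor `(2π)^{-1/2}`, the Fourier transform in `z` of `h = w ∘ (coordinate change)`, and `∂₁ w`
pulls back to `p ∂ₓ h + ∂_z h`. Differentiating under the integral sign, `∂ₓ h` contributes
`p ∂ₓ Wig_p[w]`; integrating by parts in `z`, `∂_z h` contributes `i y Wig_p[w]`. -/

lemma integrable_one_add_abs_sq_inv : Integrable fun z : ℝ => ((1 + |z|) ^ 2)⁻¹ := by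
  refine (integrable_one_add_norm (E := ℝ) (μ := volume) (r := 2) (by norm_num)).congr ?_
  filter_upwards with z
  rw [Real.rpow_neg (by positivity), Real.norm_eq_abs, Real.rpow_two]

lemma norm_cexp_neg_I_mul_mul (z y : ℝ) : ‖cexp (-(I * z * y))‖ = 1 := by
  rw [show -(I * z * y) = ((-(z * y) : ℝ) : ℂ) * I by push_cast; ring, norm_exp_ofReal_mul_I]

def partialFourier (f : ℝ × ℝ → ℂ) (v : ℝ × ℝ) : ℂ :=
  ∫ z : ℝ, cexp (-(I * z * v.2)) * f (v.1, z)

lemma partialFourier_const_mul (c : ℂ) (f : ℝ × ℝ → ℂ) (v : ℝ × ℝ) :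
    partialFourier (fun u => c * f u) v = c * partialFourier f v := by
  simp only [partialFourier, mul_left_comm _ c, integral_const_mul]

namespace SchwartzMap

open LineDeriv ContinuousLinearMap

section

variable {E : Type*} [NormedAddCommGroup E] [NormedSpace ℝ E]

lemma exists_one_add_abs_snd_pow_mul_norm_le (f : 𝓢(ℝ × ℝ, E)) (k : ℕ) :
    ∃ C, ∀ u : ℝ × ℝ, (1 + |u.2|) ^ k * ‖f u‖ ≤ C * ((1 + |u.2|) ^ 2)⁻¹ := by
  refine ⟨2 ^ (k + 2) * (Finset.Iic (k + 2, 0)).sup (fun m => SchwartzMap.seminorm ℝ m.1 m.2) f,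
    fun u => ?_⟩
  have hf := one_add_le_sup_seminorm_apply (𝕜 := ℝ) (m := (k + 2, 0)) le_rfl le_rfl f u
  rw [norm_iteratedFDeriv_zero] at hf
  have hu : 1 + |u.2| ≤ 1 + ‖u‖ := by simpa using norm_snd_le u
  rw [← div_eq_mul_inv, le_div_iff₀ (by positivity)]
  calc (1 + |u.2|) ^ k * ‖f u‖ * (1 + |u.2|) ^ 2 = (1 + |u.2|) ^ (k + 2) * ‖f u‖ := by ring
    _ ≤ (1 + ‖u‖) ^ (k + 2) * ‖f u‖ := by gcongr
    _ ≤ _ := hf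

lemma lineDerivOp_prod_mk (f : 𝓢(ℝ × ℝ, E)) (a b : ℝ) :
    ∂_{((a, b) : ℝ × ℝ)} f = a • ∂_{((1, 0) : ℝ × ℝ)} f + b • ∂_{((0, 1) : ℝ × ℝ)} f := by
  have hab : ((a, b) : ℝ × ℝ) = a • (1, 0) + b • (0, 1) := by simp
  rw [hab, lineDerivOp_left_add, lineDerivOp_left_smul, lineDerivOp_left_smul]

end

lemma integrable_cexp_mul_slice (f : 𝓢(ℝ × ℝ, ℂ)) (x y : ℝ) :
    Integrable fun z : ℝ => cexp (-(I * z * y)) * f (x, z) := by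
  obtain ⟨C, hC⟩ := f.exists_one_add_abs_snd_pow_mul_norm_le 0
  refine (integrable_one_add_abs_sq_inv.const_mul C).mono' (by fun_prop) (ae_of_all _ fun z => ?_)
  simpa [norm_cexp_neg_I_mul_mul] using hC (x, z)

lemma partialFourier_add (f g : 𝓢(ℝ × ℝ, ℂ)) (v : ℝ × ℝ) :
    partialFourier ⇑(f + g) v = partialFourier f v + partialFourier g v := by
  simp only [partialFourier, add_apply, mul_add]
  exact integral_add (f.integrable_cexp_mul_slice _ _) (g.integrable_cexp_mul_slice _ _)

lemma partialFourier_smul (r : ℝ) (f : 𝓢(ℝ × ℝ, ℂ)) (v : ℝ × ℝ) :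
    partialFourier ⇑(r • f) v = r * partialFourier f v := by
  simp only [partialFourier, smul_apply, real_smul, mul_left_comm _ (r : ℂ), integral_const_mul]

lemma partialFourier_lineDerivOp_snd (f : 𝓢(ℝ × ℝ, ℂ)) (v : ℝ × ℝ) :
    partialFourier ⇑(∂_{((0, 1) : ℝ × ℝ)} f : 𝓢(ℝ × ℝ, ℂ)) v = I * v.2 * partialFourier f v := by
  obtain ⟨x, y⟩ := v
  have hexp (z : ℝ) : HasDerivAt (fun z : ℝ => cexp (-(I * z * y)))
      (-(I * y) * cexp (-(I * z * y))) z := by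
    have h : HasDerivAt (fun z : ℝ => -(I * z * y)) (-(I * y)) z := by
      simpa using (((hasDerivAt_id z).ofReal_comp.const_mul I).mul_const (y : ℂ)).fun_neg
    simpa only [mul_comm] using h.cexp
  have hslice (z : ℝ) : HasDerivAt (fun z : ℝ => f (x, z)) (∂_{((0, 1) : ℝ × ℝ)} f (x, z)) z :=
    (f.hasFDerivAt (x, z)).comp_hasDerivAt z ((hasDerivAt_const z x).prodMk (hasDerivAt_id z))
  have hparts := integral_mul_deriv_eq_deriv_mul_of_integrable (fun z _ => hexp z)
    (fun z _ => hslice z) ((∂_{((0, 1) : ℝ × ℝ)} f).integrable_cexp_mul_slice x y)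
    (by simpa only [Pi.mul_def, mul_assoc] using
      (f.integrable_cexp_mul_slice x y).const_mul (-(I * y)))
    (f.integrable_cexp_mul_slice x y)
  simp only [partialFourier, lineDerivOp_apply_eq_fderiv] at hparts ⊢
  rw [hparts]
  simp only [mul_assoc, integral_const_mul]
  ring

lemma exists_hasFDerivAt_partialFourier (f : 𝓢(ℝ × ℝ, ℂ)) (v : ℝ × ℝ) :
    ∃ L : ℝ × ℝ →L[ℝ] ℂ, HasFDerivAt (partialFourier f) L v ∧
      L (1, 0) = partialFourier ⇑(∂_{((1, 0) : ℝ × ℝ)} f : 𝓢(ℝ × ℝ, ℂ)) v := by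
  let F' : ℝ × ℝ → ℝ → ℝ × ℝ →L[ℝ] ℂ := fun u z =>
    cexp (-(I * z * u.2)) • (fderiv ℝ f (u.1, z)).comp ((fst ℝ ℝ ℝ).prod 0)
      + f (u.1, z) • cexp (-(I * z * u.2)) • (-(I * z)) • ofRealCLM.comp (snd ℝ ℝ ℝ)
  have hderiv (z : ℝ) (u : ℝ × ℝ) :
      HasFDerivAt (fun u : ℝ × ℝ => cexp (-(I * z * u.2)) * f (u.1, z)) (F' u z) u := by
    have hphase : HasFDerivAt (fun u : ℝ × ℝ => -(I * z * u.2))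
        ((-(I * z)) • ofRealCLM.comp (snd ℝ ℝ ℝ)) u := by
      convert ((-(I * z)) • ofRealCLM.comp (snd ℝ ℝ ℝ)).hasFDerivAt using 1
      ext u
      simp only [smul_apply, comp_apply, coe_snd', ofRealCLM_apply, smul_eq_mul]
      ring
    exact hphase.cexp.mul
      ((f.hasFDerivAt (u.1, z)).comp u (hasFDerivAt_fst.prodMk (hasFDerivAt_const z u)))
  obtain ⟨C₁, hC₁⟩ := (fderivCLM ℝ (ℝ × ℝ) ℂ f).exists_one_add_abs_snd_pow_mul_norm_le 0
  obtain ⟨C₀, hC₀⟩ := f.exists_one_add_abs_snd_pow_mul_norm_le 1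
  have hfst : ‖(fst ℝ ℝ ℝ).prod (0 : ℝ × ℝ →L[ℝ] ℝ)‖ ≤ 1 :=
    opNorm_le_bound _ zero_le_one fun q => by simpa using norm_fst_le q
  have hsnd : ‖ofRealCLM.comp (snd ℝ ℝ ℝ)‖ ≤ 1 :=
    opNorm_le_bound _ zero_le_one fun q => by simpa using norm_snd_le q
  have hbound (u : ℝ × ℝ) (z : ℝ) : ‖F' u z‖ ≤ (C₁ + C₀) * ((1 + |z|) ^ 2)⁻¹ := by
    have h₁ : ‖fderiv ℝ f (u.1, z)‖ ≤ C₁ * ((1 + |z|) ^ 2)⁻¹ := by simpa using hC₁ (u.1, z)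
    have h₀ : ‖f (u.1, z)‖ * |z| ≤ C₀ * ((1 + |z|) ^ 2)⁻¹ :=
      le_trans (by rw [pow_one, mul_comm]; gcongr; linarith) (hC₀ (u.1, z))
    calc ‖F' u z‖ ≤ ‖fderiv ℝ f (u.1, z)‖ + ‖f (u.1, z)‖ * |z| := by
          refine (norm_add_le _ _).trans (add_le_add ?_ ?_)
          · rw [norm_smul, norm_cexp_neg_I_mul_mul, one_mul]
            exact (opNorm_comp_le _ _).trans (mul_le_of_le_one_right (norm_nonneg _) hfst)
          · rw [norm_smul, norm_smul, norm_smul, norm_cexp_neg_I_mul_mul, one_mul]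
            gcongr
            simpa using mul_le_of_le_one_right (abs_nonneg z) hsnd
      _ ≤ (C₁ + C₀) * ((1 + |z|) ^ 2)⁻¹ := by linarith
  have hcont : Continuous (F' v) := by
    have : Continuous (fderiv ℝ f) := (fderivCLM ℝ (ℝ × ℝ) ℂ f).continuous
    fun_prop
  have hint : Integrable (F' v) :=
    (integrable_one_add_abs_sq_inv.const_mul _).mono' hcont.aestronglyMeasurable
      (ae_of_all _ (hbound v))
  refine ⟨_, hasFDerivAt_integral_of_dominated_of_fderiv_le univ_mem
    (Eventually.of_forall fun u => (f.integrable_cexp_mul_slice u.1 u.2).aestronglyMeasurable)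
    (f.integrable_cexp_mul_slice v.1 v.2) hcont.aestronglyMeasurable
    (ae_of_all _ fun z u _ => hbound u z) (integrable_one_add_abs_sq_inv.const_mul _)
    (ae_of_all _ fun z u _ => hderiv z u), ?_⟩
  rw [integral_apply hint]
  simp [F', partialFourier, lineDerivOp_apply_eq_fderiv]

end SchwartzMap

def wigCoord (p : ℝ) : (ℝ × ℝ) ≃L[ℝ] ℝ × ℝ :=
  LinearEquiv.toContinuousLinearEquiv
    { toFun := fun v => (v.1 + (1 - p) * v.2, v.1 - p * v.2)
      invFun := fun u => (p * u.1 + (1 - p) * u.2, u.1 - u.2)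
      map_add' := fun v v' => by ext <;> simp <;> ring
      map_smul' := fun r v => by ext <;> simp <;> ring
      left_inv := fun v => by ext <;> simp <;> ring
      right_inv := fun u => by ext <;> simp <;> ring }

lemma wigCoord_apply (p : ℝ) (v : ℝ × ℝ) :
    wigCoord p v = (v.1 + (1 - p) * v.2, v.1 - p * v.2) := rfl

lemma Wig_eq_partialFourier (p : ℝ) (f : ℝ × ℝ → ℂ) :
    Wig p f = fun v =>
      (((2 * Real.pi) ^ (-(1/2 : ℝ)) : ℝ) : ℂ) * partialFourier (f ∘ wigCoord p) v :=
  rfl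

open LineDeriv in
/-- For every `w ∈ S(ℝ²)`, `Wig_p[D₁ w] = (M₂ + pD₁) Wig_p[w]`. -/
theorem statement17 (p : ℝ) (w : 𝓢(ℝ × ℝ, ℂ)) (x y : ℝ) :
    Wig p (cD1 ⇑w) (x, y) = (y : ℂ) * Wig p ⇑w (x, y)
      + (p : ℂ) * (-Complex.I * fderiv ℝ (Wig p ⇑w) (x, y) (1, 0)) := by
  set h := compCLMOfContinuousLinearEquiv ℂ (wigCoord p) w
  have hw : ⇑w ∘ wigCoord p = h := rfl
  have hD₁ : cD1 ⇑w ∘ wigCoord p =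
      fun u => -I * (p • ∂_{((1, 0) : ℝ × ℝ)} h + ∂_{((0, 1) : ℝ × ℝ)} h : 𝓢(ℝ × ℝ, ℂ)) u := by
    have hdir : wigCoord p (p, 1) = (1, 0) := by simp [wigCoord_apply]
    have hchain := lineDerivOp_compCLMOfContinuousLinearEquiv ℂ ((p, 1) : ℝ × ℝ) (wigCoord p) w
    rw [hdir, h.lineDerivOp_prod_mk, one_smul] at hchain
    ext u
    simp only [Function.comp_apply, cD1, hchain]
    rfl
  obtain ⟨L, hL, hL₁⟩ := h.exists_hasFDerivAt_partialFourier (x, y)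
  rw [Wig_eq_partialFourier, Wig_eq_partialFourier, hD₁, hw, (hL.const_mul _).fderiv]
  simp only [partialFourier_const_mul, partialFourier_add, partialFourier_smul,
    partialFourier_lineDerivOp_snd, smul_apply, smul_eq_mul, hL₁]
  linear_combination (-(((2 * Real.pi) ^ (-(1/2 : ℝ)) : ℝ) : ℂ) * y * partialFourier h (x, y)) *
    I_mul_I

end
end
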